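/- For all 1 ≤ m < n ≤ N(α)+1 and any points x_i ∈ I_i for i = m, m+1, …, n−1, one has e^{−1}·|(f^{n−m})'(c_m)| ≤ ∏_{i=m}^{n−1} |f'(x_i)| ≤ e·|(f^{n−m})'(c_m)|. -/

import Mathlib

open Set MeasureTheory Filter
open scoped ENNReal

noncomputable section

/-- The quadratic map `f(x) = a - x²`. -/
def qm (a : ℝ) : ℝ → ℝ := fun x => a - x ^ 2

/-- The critical point `0` of `qm a` is strictly pre-periodic: its forward orbit never
returns to `0` and is eventually periodic. -/
def StrictlyPreperiodic (a : ℝ) : Prop :=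
  (∀ i : ℕ, 1 ≤ i → (qm a)^[i] 0 ≠ 0) ∧
    ∃ m p : ℕ, 1 ≤ m ∧ 1 ≤ p ∧ (qm a)^[m + p] 0 = (qm a)^[m] 0

/-- A lift of the Viana skew product `F(θ, x) = (dθ, f(x) + αφ(θ))` to `ℝ × ℝ`;
for `φ` of period `1` this is a lift of the corresponding map of `(ℝ/ℤ) × ℝ`. -/
def Viana (a : ℝ) (d : ℕ) (φ : ℝ → ℝ) (α : ℝ) : ℝ × ℝ → ℝ × ℝ :=
  fun p => ((d : ℝ) * p.1, qm a p.2 + α * φ p.1)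

/-- The fibre maps `f_n`, defined by `F^n(θ, x) = (d^n θ, f_n(θ, x))`. -/
def fn (a : ℝ) (d : ℕ) (φ : ℝ → ℝ) (α : ℝ) (n : ℕ) (θ x : ℝ) : ℝ :=
  ((Viana a d φ α)^[n] (θ, x)).2

/-- Endpoints of the shadowing intervals: `IEnd a α n` gives the endpoints of `I_{n+1}`, where
`I₁ = [c₁ - 2α, c₁ + 2α]` and `I_{n+1}` is the closed interval containing `f(I_n)` both of whose
complementary components in `I_{n+1}` have length `α`. -/
def IEnd (a α : ℝ) : ℕ → ℝ × ℝ
  | 0 => (qm a 0 - 2 * α, qm a 0 + 2 * α)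
  | n + 1 =>
      (sInf (qm a '' Set.Icc (IEnd a α n).1 (IEnd a α n).2) - α,
        sSup (qm a '' Set.Icc (IEnd a α n).1 (IEnd a α n).2) + α)

/-- The shadowing interval `I_n`, for `n ≥ 1`. -/
def Iseq (a α : ℝ) (n : ℕ) : Set ℝ := Set.Icc (IEnd a α (n - 1)).1 (IEnd a α (n - 1)).2

/-- The length `|I_{n+1}|` of the shadowing interval `I_{n+1}`. -/
def len (a α : ℝ) (n : ℕ) : ℝ := (IEnd a α n).2 - (IEnd a α n).1

/-- `N(α)`: the maximal integer `N` such that `|I_n| < ξ₀` for all `1 ≤ n ≤ N` and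
`∑_{n=1}^{N} |I_n| ≤ ξ₀`. -/
def Nal (a ξ₀ α : ℝ) : ℕ :=
  sSup {N : ℕ | (∀ n : ℕ, 1 ≤ n → n ≤ N → len a α (n - 1) < ξ₀) ∧
    ∑ n ∈ Finset.range N, len a α n ≤ ξ₀}

/-!
Since `f'(x) = -2x`, `|f'(x_i)|` is within relative error `t_i = |I_i| / (2ξ₀)` of `|f'(c_i)|`:
both `x_i` and `c_i` lie in `I_i`, and `|c_i| ≥ 2ξ₀`. The definition of `N(α)` gives
`∑ t_i ≤ 1/2`, so the ratio of the two products lies between `∏ (1 - t_i) ≥ exp (-2 ∑ t_i) ≥ e⁻¹`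
and `∏ (1 + t_i) ≤ exp (∑ t_i) ≤ e`; the chain rule identifies `∏ |f'(c_i)|` with
`|(f^{n-m})'(c_m)|`.
-/

open Finset

lemma exp_neg_two_mul_le_one_sub {t : ℝ} (ht₀ : 0 ≤ t) (ht : t ≤ 1 / 2) :
    Real.exp (-(2 * t)) ≤ 1 - t := by
  have hinv : Real.exp (-(2 * t)) * Real.exp (2 * t) = 1 := by
    rw [← Real.exp_add, neg_add_cancel, Real.exp_zero]
  nlinarith [Real.add_one_le_exp (2 * t), Real.exp_pos (-(2 * t))]

lemma exp_bounds_abs_of_abs_sub_le_mul_abs {x c t : ℝ} (ht₀ : 0 ≤ t)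
    (ht : t ≤ 1 / 2) (hxc : |x - c| ≤ t * |c|) :
    Real.exp (-(2 * t)) * |c| ≤ |x| ∧ |x| ≤ Real.exp t * |c| := by
  have hc := abs_nonneg c
  have hlower : |c| - |x - c| ≤ |x| := by
    linarith [abs_sub_abs_le_abs_sub c x, abs_sub_comm x c]
  have hupper : |x| ≤ |c| + |x - c| := by
    simpa using abs_add_le c (x - c)
  constructor
  · nlinarith [exp_neg_two_mul_le_one_sub ht₀ ht]
  · nlinarith [Real.add_one_le_exp t]

theorem prod_abs_distortion {ι : Type*} (s : Finset ι) {ξ : ℝ} (hξ : 0 < ξ) {x c L : ι → ℝ}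
    (hc : ∀ i ∈ s, 2 * ξ ≤ |c i|) (hxc : ∀ i ∈ s, |x i - c i| ≤ L i)
    (hsum : ∑ i ∈ s, L i ≤ ξ) :
    (Real.exp 1)⁻¹ * ∏ i ∈ s, |c i| ≤ ∏ i ∈ s, |x i| ∧
      ∏ i ∈ s, |x i| ≤ Real.exp 1 * ∏ i ∈ s, |c i| := by
  set t : ι → ℝ := fun i => L i / (2 * ξ)
  have hL₀ : ∀ i ∈ s, 0 ≤ L i := fun i hi => (abs_nonneg _).trans (hxc i hi)
  have ht₀ : ∀ i ∈ s, 0 ≤ t i := fun i hi => div_nonneg (hL₀ i hi) (by positivity)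
  have hsum_t : ∑ i ∈ s, t i ≤ 1 / 2 := by
    rw [← sum_div, div_le_iff₀ (by positivity)]
    linarith
  have hfactor : ∀ i ∈ s,
      Real.exp (-(2 * t i)) * |c i| ≤ |x i| ∧ |x i| ≤ Real.exp (t i) * |c i| := by
    intro i hi
    refine exp_bounds_abs_of_abs_sub_le_mul_abs (ht₀ i hi)
      ((single_le_sum ht₀ hi).trans hsum_t) ((hxc i hi).trans ?_)
    calc L i = t i * (2 * ξ) := by simp only [t]; field_simp
      _ ≤ t i * |c i| := mul_le_mul_of_nonneg_left (hc i hi) (ht₀ i hi)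
  constructor
  · calc (Real.exp 1)⁻¹ * ∏ i ∈ s, |c i|
        ≤ Real.exp (∑ i ∈ s, -(2 * t i)) * ∏ i ∈ s, |c i| := by
          rw [← Real.exp_neg, sum_neg_distrib, ← mul_sum]
          gcongr
          linarith
      _ = ∏ i ∈ s, Real.exp (-(2 * t i)) * |c i| := by rw [Real.exp_sum, prod_mul_distrib]
      _ ≤ ∏ i ∈ s, |x i| :=
          prod_le_prod (fun i _ => by positivity) fun i hi => (hfactor i hi).1
  · calc ∏ i ∈ s, |x i| ≤ ∏ i ∈ s, Real.exp (t i) * |c i| :=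
          prod_le_prod (fun i _ => abs_nonneg _) fun i hi => (hfactor i hi).2
      _ = Real.exp (∑ i ∈ s, t i) * ∏ i ∈ s, |c i| := by rw [Real.exp_sum, prod_mul_distrib]
      _ ≤ Real.exp 1 * ∏ i ∈ s, |c i| := by
          gcongr
          linarith

theorem hasDerivAt_iterate {𝕜 : Type*} [NontriviallyNormedField 𝕜] {f f' : 𝕜 → 𝕜}
    (hf : ∀ y, HasDerivAt f (f' y) y) (k : ℕ) (y : 𝕜) :
    HasDerivAt f^[k] (∏ j ∈ range k, f' (f^[j] y)) y := by
  induction k with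
  | zero => simpa using hasDerivAt_id y
  | succ k ih =>
    rw [Function.iterate_succ', prod_range_succ, mul_comm]
    exact (hf _).comp y ih

lemma hasDerivAt_qm (a x : ℝ) : HasDerivAt (qm a) (-(2 * x)) x := by
  unfold qm
  simpa using (hasDerivAt_pow 2 x).const_sub a

lemma deriv_qm (a x : ℝ) : deriv (qm a) x = -(2 * x) :=
  (hasDerivAt_qm a x).deriv

lemma deriv_qm_iterate_orbit (a : ℝ) (m n : ℕ) :
    deriv (qm a)^[n - m] ((qm a)^[m] 0) = ∏ i ∈ Ico m n, deriv (qm a) ((qm a)^[i] 0) := by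
  rw [(hasDerivAt_iterate (fun y => (hasDerivAt_qm a y).differentiableAt.hasDerivAt) _ _).deriv,
    prod_Ico_eq_prod_range]
  refine prod_congr rfl fun j _ => ?_
  rw [← Function.iterate_add_apply, add_comm]

lemma orbit_mem_IEnd (a : ℝ) {α : ℝ} (hα : 0 ≤ α) (n : ℕ) :
    (qm a)^[n + 1] 0 ∈ Icc (IEnd a α n).1 (IEnd a α n).2 := by
  induction n with
  | zero => simp only [IEnd, zero_add, Function.iterate_one, Set.mem_Icc]; constructor <;> linarith
  | succ n ih =>
    have hS : IsCompact (qm a '' Icc (IEnd a α n).1 (IEnd a α n).2) :=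
      isCompact_Icc.image (by unfold qm; fun_prop)
    have hmem := mem_image_of_mem (qm a) ih
    rw [← Function.iterate_succ_apply' (qm a) (n + 1)] at hmem
    simp only [IEnd, Set.mem_Icc]
    constructor
    · linarith [csInf_le hS.bddBelow hmem]
    · linarith [le_csSup hS.bddAbove hmem]

lemma two_mul_le_len (a : ℝ) {α : ℝ} (hα : 0 ≤ α) (n : ℕ) : 2 * α ≤ len a α n := by
  cases n with
  | zero => simp only [len, IEnd]; linarith
  | succ n =>
    have hS : IsCompact (qm a '' Icc (IEnd a α n).1 (IEnd a α n).2) :=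
      isCompact_Icc.image (by unfold qm; fun_prop)
    simp only [len, IEnd]
    linarith [Real.sInf_le_sSup _ hS.bddBelow hS.bddAbove]

lemma sum_range_len_Nal_le (a : ℝ) {ξ₀ α : ℝ} (hξ₀ : 0 ≤ ξ₀) (hα : 0 < α) :
    ∑ n ∈ range (Nal a ξ₀ α), len a α n ≤ ξ₀ := by
  set S := {N : ℕ | (∀ n : ℕ, 1 ≤ n → n ≤ N → len a α (n - 1) < ξ₀) ∧
    ∑ n ∈ range N, len a α n ≤ ξ₀}
  have hne : S.Nonempty := ⟨0, fun n h₁ h₀ => by omega, by simpa using hξ₀⟩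
  have hbdd : BddAbove S := by
    refine ⟨⌊ξ₀ / (2 * α)⌋₊, fun N hN => Nat.le_floor ?_⟩
    have hlow : ∑ _n ∈ range N, 2 * α ≤ ∑ n ∈ range N, len a α n :=
      sum_le_sum fun n _ => two_mul_le_len a hα.le n
    rw [sum_const, card_range, nsmul_eq_mul] at hlow
    rw [le_div_iff₀ (by positivity)]
    linarith [hN.2]
  exact (Nat.sSup_mem hne hbdd).2

lemma sum_Ico_len_le (a : ℝ) {ξ₀ α : ℝ} (hξ₀ : 0 ≤ ξ₀) (hα : 0 < α) {m n : ℕ} (hm : 1 ≤ m)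
    (hn : n ≤ Nal a ξ₀ α + 1) :
    ∑ i ∈ Ico m n, len a α (i - 1) ≤ ξ₀ := by
  have hlen : ∀ j, 0 ≤ len a α j := fun j => by linarith [two_mul_le_len a hα.le j]
  obtain ⟨k, rfl⟩ := Nat.exists_eq_add_of_le' hm
  calc ∑ i ∈ Ico (k + 1) n, len a α (i - 1)
      ≤ ∑ i ∈ Ico (k + 1) (Nal a ξ₀ α + 1), len a α (i - 1) :=
        sum_le_sum_of_subset_of_nonneg (Ico_subset_Ico_right hn) fun i _ _ => hlen _
    _ = ∑ i ∈ Ico k (Nal a ξ₀ α), len a α i := by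
        rw [← sum_Ico_add']; simp
    _ ≤ ∑ i ∈ range (Nal a ξ₀ α), len a α i := by
        rw [range_eq_Ico]
        exact sum_le_sum_of_subset_of_nonneg (Ico_subset_Ico_left k.zero_le) fun i _ _ => hlen _
    _ ≤ ξ₀ := sum_range_len_Nal_le a hξ₀ hα

theorem shadowing_distortion_general
    (a : ℝ) (ξ₀ : ℝ) (hξ₀ : 0 < ξ₀)
    (hcrit : ∀ i : ℕ, 1 ≤ i → (qm a)^[i] 0 ∉ Set.Ioo (-(2 * ξ₀)) (2 * ξ₀))
    (α : ℝ) (hα : 0 < α) :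
    ∀ m n : ℕ, 1 ≤ m → m < n → n ≤ Nal a ξ₀ α + 1 →
      ∀ x : ℕ → ℝ, (∀ i : ℕ, m ≤ i → i < n → x i ∈ Iseq a α i) →
        (Real.exp 1)⁻¹ * |deriv ((qm a)^[n - m]) ((qm a)^[m] 0)| ≤
            ∏ i ∈ Finset.Ico m n, |deriv (qm a) (x i)| ∧
          ∏ i ∈ Finset.Ico m n, |deriv (qm a) (x i)| ≤
            Real.exp 1 * |deriv ((qm a)^[n - m]) ((qm a)^[m] 0)| := by
  intro m n hm _ hn x hx
  rw [deriv_qm_iterate_orbit, abs_prod]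
  refine prod_abs_distortion (Ico m n) (ξ := 2 * ξ₀) (L := fun i => 2 * len a α (i - 1))
    (by positivity) (fun i hi => ?_) (fun i hi => ?_) ?_
  · have hc : 2 * ξ₀ ≤ |(qm a)^[i] 0| :=
      not_lt.1 fun h => hcrit i (hm.trans (mem_Ico.1 hi).1) (abs_lt.1 h)
    rw [deriv_qm, abs_neg, abs_mul, abs_two]
    linarith
  · obtain ⟨hmi, hin⟩ := mem_Ico.1 hi
    have hc : (qm a)^[i] 0 ∈ Iseq a α i := by
      have := orbit_mem_IEnd a hα.le (i - 1)
      rwa [Nat.sub_add_cancel (hm.trans hmi)] at this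
    rw [deriv_qm, deriv_qm, neg_sub_neg, ← mul_sub, abs_mul, abs_two]
    gcongr
    exact Real.dist_le_of_mem_Icc hc (hx i hmi hin)
  · rw [← mul_sum]
    linarith [sum_Ico_len_le a hξ₀.le hα hm hn]

/-- distortion along the shadowing intervals. For all `1 ≤ m < n ≤ N(α)+1`
and any `x_i ∈ I_i` (`m ≤ i < n`),
`e⁻¹ |(f^{n-m})'(c_m)| ≤ ∏_{i=m}^{n-1} |f'(x_i)| ≤ e |(f^{n-m})'(c_m)|`. -/
theorem shadowing_distortion
    (a : ℝ) (ha : a ∈ Set.Ioo (1 : ℝ) 2) (hpre : StrictlyPreperiodic a)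
    (ξ₀ : ℝ) (hξ₀ : 0 < ξ₀)
    (hcrit : ∀ i : ℕ, 1 ≤ i → (qm a)^[i] 0 ∉ Set.Ioo (-(2 * ξ₀)) (2 * ξ₀))
    (α : ℝ) (hα : 0 < α) (hαξ : α ≤ ξ₀) :
    ∀ m n : ℕ, 1 ≤ m → m < n → n ≤ Nal a ξ₀ α + 1 →
      ∀ x : ℕ → ℝ, (∀ i : ℕ, m ≤ i → i < n → x i ∈ Iseq a α i) →
        (Real.exp 1)⁻¹ * |deriv ((qm a)^[n - m]) ((qm a)^[m] 0)| ≤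
            ∏ i ∈ Finset.Ico m n, |deriv (qm a) (x i)| ∧
          ∏ i ∈ Finset.Ico m n, |deriv (qm a) (x i)| ≤
            Real.exp 1 * |deriv ((qm a)^[n - m]) ((qm a)^[m] 0)| :=
  shadowing_distortion_general a ξ₀ hξ₀ hcrit α hα
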